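/- A function f : Ω → ℝ belongs to the Barron space B if and only if there exist a Borel probability measure ρ̂ on S × T and a function η ∈ L²(ρ̂) such that f(x) = ∫_{S×T} aᵀ σ(b*x + c) η(a, b, c) dρ̂(a, b, c) for every x ∈ Ω. Moreover, for f ∈ B, ‖f‖_B equals the infimum of (∫_{S×T} |η|² dρ̂)^{1/2} over all such pairs (ρ̂, η). -/

import Mathlib

open MeasureTheory ENNReal

noncomputable section

abbrev Vec (N : ℕ) := Fin N → ℝ

abbrev Param (N : ℕ) := Vec N × Vec N × Vec N

/-- componentwise ReLU -/
def relu {N : ℕ} (x : Vec N) : Vec N := fun i => max (x i) 0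

/-- graph convolution defined via the orthogonal matrix `U` -/
def conv {N : ℕ} (U : Matrix (Fin N) (Fin N) ℝ) (b x : Vec N) : Vec N :=
  U.mulVec (U.transpose.mulVec b * U.transpose.mulVec x)

/-- The data and standing assumptions of the graph Barron space setting. -/
structure Setting (N : ℕ) where
  U : Matrix (Fin N) (Fin N) ℝ
  W : Submodule ℝ (Vec N)
  dom : Set (Vec N)
  nrm : Vec N → ℝ
  conorm : Vec N → ℝ
  hN : 1 ≤ N
  hU : U.transpose * U = 1
  hdomc : IsCompact dom
  hdomne : dom.Nonempty
  nrm_add : ∀ x y, nrm (x + y) ≤ nrm x + nrm y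
  nrm_smul : ∀ (t : ℝ) (x), nrm (t • x) = |t| * nrm x
  nrm_eq_zero : ∀ x, nrm x = 0 ↔ x = 0
  relu_nrm_le : ∀ x, nrm (relu x) ≤ nrm x
  conorm_add : ∀ b b', b ∈ W → b' ∈ W → conorm (b + b') ≤ conorm b + conorm b'
  conorm_smul : ∀ (t : ℝ) (b), b ∈ W → conorm (t • b) = |t| * conorm b
  conorm_eq_zero : ∀ b, b ∈ W → (conorm b = 0 ↔ b = 0)
  conv_nrm_le : ∀ b ∈ W, ∀ x ∈ dom, nrm (conv U b x) ≤ conorm b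

namespace Setting

variable {N : ℕ} (S : Setting N)

/-- dual norm `‖a‖_* = sup {aᵀx : ‖x‖ ≤ 1}` -/
def dual (a : Vec N) : ℝ :=
  sSup {t : ℝ | ∃ x : Vec N, S.nrm x ≤ 1 ∧ t = ∑ i, a i * x i}

/-- the neuron `aᵀ σ(b*x + c)` -/
def neuron (x : Vec N) (p : Param N) : ℝ :=
  ∑ i, p.1 i * relu (conv S.U p.2.1 x + p.2.2) i

/-- `P_f`: probability measures on `ℝ^N × W × ℝ^N` representing `f` on `Ω`. -/
def reps (f : Vec N → ℝ) : Set (Measure (Param N)) :=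
  {ρ | IsProbabilityMeasure ρ ∧ ρ {p : Param N | p.2.1 ∉ S.W} = 0 ∧
    ∀ x ∈ S.dom, Integrable (S.neuron x) ρ ∧ f x = ∫ p, S.neuron x p ∂ρ}

/-- the weight `‖a‖_* (‖b‖_co + ‖c‖)` -/
def weight (p : Param N) : ℝ := S.dual p.1 * (S.conorm p.2.1 + S.nrm p.2.2)

def cost (ρ : Measure (Param N)) : ℝ≥0∞ :=
  ∫⁻ p, ENNReal.ofReal (S.weight p) ∂ρ

/-- the Barron norm `‖f‖_{B_1} ∈ [0,∞]` -/
def barron (f : Vec N → ℝ) : ℝ≥0∞ :=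
  ⨅ ρ ∈ S.reps f, S.cost ρ

/-- membership in the Barron space `B = B_1` -/
def memB (f : Vec N → ℝ) : Prop :=
  (S.reps f).Nonempty ∧ S.barron f < ⊤

/-- `(a,b,c)` lies in `S × T` -/
def onST (p : Param N) : Prop :=
  S.dual p.1 = 1 ∧ p.2.1 ∈ S.W ∧ S.conorm p.2.1 + S.nrm p.2.2 = 1

/-- output of the shallow GCNN with parameters `θ` -/
def netOut {M : ℕ} (θ : Fin M → Param N) (x : Vec N) : ℝ :=
  (M : ℝ)⁻¹ * ∑ m, S.neuron x (θ m)

/-- the `p`-path norm, `1 ≤ p ≤ ∞` -/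
def pathNorm {M : ℕ} (p : ℝ≥0∞) (θ : Fin M → Param N) : ℝ :=
  if p = ⊤ then ⨆ m, S.weight (θ m)
  else ((M : ℝ)⁻¹ * ∑ m, S.weight (θ m) ^ p.toReal) ^ (p.toReal)⁻¹

/-- the class `C_{Q,p}` of GCNN outputs with `p`-path norm at most `Q` -/
def CQp (Q : ℝ) (p : ℝ≥0∞) : Set (Vec N → ℝ) :=
  {g | ∃ M : ℕ, 1 ≤ M ∧ ∃ θ : Fin M → Param N,
    (∀ m, (θ m).2.1 ∈ S.W) ∧ S.pathNorm p θ ≤ Q ∧ ∀ x ∈ S.dom, g x = S.netOut θ x}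

end Setting

section Generic
variable {E : Type*} [AddCommGroup E] [Module ℝ E] (n : E → ℝ)

lemma gnorm_zero (hsmul : ∀ (t : ℝ) x, n (t • x) = |t| * n x) : n 0 = 0 := by
  simpa using hsmul 0 0

lemma gnorm_neg (hsmul : ∀ (t : ℝ) x, n (t • x) = |t| * n x) (x : E) : n (-x) = n x := by
  simpa using hsmul (-1) x

lemma gnorm_nonneg (hadd : ∀ x y, n (x + y) ≤ n x + n y)
    (hsmul : ∀ (t : ℝ) x, n (t • x) = |t| * n x) (x : E) : 0 ≤ n x := by
  have h1 := hadd x (-x)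
  rw [add_neg_cancel, gnorm_zero n hsmul, gnorm_neg n hsmul] at h1
  linarith

lemma gnorm_abs_sub (hadd : ∀ x y, n (x + y) ≤ n x + n y)
    (hsmul : ∀ (t : ℝ) x, n (t • x) = |t| * n x) (x y : E) : |n x - n y| ≤ n (x - y) := by
  rw [abs_sub_le_iff]
  constructor
  · have := hadd (x - y) y; simpa using this
  · have := hadd (y - x) x
    have h2 : n (y - x) = n (x - y) := by rw [← neg_sub x y, gnorm_neg n hsmul]
    simp only [sub_add_cancel] at this
    linarith

lemma gnorm_sum_le {ι : Type*} (hadd : ∀ x y, n (x + y) ≤ n x + n y)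
    (hsmul : ∀ (t : ℝ) x, n (t • x) = |t| * n x) (s : Finset ι) (f : ι → E) :
    n (∑ i ∈ s, f i) ≤ ∑ i ∈ s, n (f i) := by
  classical
  induction s using Finset.induction with
  | empty => simp [gnorm_zero n hsmul]
  | insert _ _ h ih =>
    rename_i a s
    rw [Finset.sum_insert h, Finset.sum_insert h]
    exact le_trans (hadd _ _) (by linarith)

end Generic

lemma continuous_of_dominated_sub {E : Type*} [SeminormedAddCommGroup E] (g L : E → ℝ)
    (h : ∀ x y, |g x - g y| ≤ L (x - y)) (hL : Continuous L) (hL0 : L 0 = 0) :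
    Continuous g := by
  rw [continuous_iff_continuousAt]
  intro x₀
  have h1 : Filter.Tendsto (fun x => L (x - x₀)) (nhds x₀) (nhds 0) := by
    have : Continuous (fun x => L (x - x₀)) := hL.comp (continuous_id.sub (continuous_const (y := x₀)))
    have := this.tendsto x₀
    simpa [hL0] using this
  have h2 : Filter.Tendsto (fun x => g x - g x₀) (nhds x₀) (nhds 0) :=
    squeeze_zero_norm (fun x => by simpa [Real.norm_eq_abs] using h x x₀) h1
  have := h2.add (tendsto_const_nhds (x := g x₀))
  exact (by simpa using this : Filter.Tendsto g (nhds x₀) (nhds (g x₀)))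

namespace Setting

variable {N : ℕ} (S : Setting N)

lemma nrm_zero : S.nrm 0 = 0 := gnorm_zero _ S.nrm_smul

lemma nrm_nonneg (x : Vec N) : 0 ≤ S.nrm x := gnorm_nonneg _ S.nrm_add S.nrm_smul x

lemma nrm_pos {x : Vec N} (h : x ≠ 0) : 0 < S.nrm x :=
  (S.nrm_nonneg x).lt_of_ne' (fun h0 => h ((S.nrm_eq_zero x).mp h0))

lemma vec_decomp (v : Vec N) : v = ∑ i, v i • (Pi.single i 1 : Vec N) := by
  funext j
  rw [Finset.sum_apply]
  simp only [Pi.smul_apply, Pi.single_apply, smul_eq_mul]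
  simp [Finset.sum_ite_eq]

lemma nrm_le_sum (v : Vec N) : S.nrm v ≤ ∑ i, |v i| * S.nrm ((Pi.single i 1 : Vec N)) := by
  calc S.nrm v = S.nrm (∑ i, v i • (Pi.single i 1 : Vec N)) := by rw [← vec_decomp v]
  _ ≤ ∑ i, S.nrm (v i • (Pi.single i 1 : Vec N)) := gnorm_sum_le _ S.nrm_add S.nrm_smul _ _
  _ = ∑ i, |v i| * S.nrm ((Pi.single i 1 : Vec N)) := by simp [S.nrm_smul]

lemma nrm_continuous : Continuous S.nrm := by
  apply continuous_of_dominated_sub S.nrm (fun v => ∑ i, |v i| * S.nrm ((Pi.single i 1 : Vec N)))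
  · intro x y
    exact le_trans (gnorm_abs_sub _ S.nrm_add S.nrm_smul x y) (S.nrm_le_sum _)
  · exact continuous_finset_sum _ fun i _ => ((continuous_apply i).abs).mul continuous_const
  · simp

lemma exists_cLow : ∃ c : ℝ, 0 < c ∧ ∀ x : Vec N, c * ‖x‖ ≤ S.nrm x := by
  haveI : Nonempty (Fin N) := ⟨⟨0, S.hN⟩⟩
  have hne : (Metric.sphere (0 : Vec N) 1).Nonempty :=
    NormedSpace.sphere_nonempty.mpr zero_le_one
  obtain ⟨z, hz, hmin⟩ := (isCompact_sphere (0 : Vec N) 1).exists_isMinOn hne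
    (S.nrm_continuous.continuousOn)
  have hz1 : ‖z‖ = 1 := by simpa using hz
  have hzne : z ≠ 0 := by intro h; rw [h] at hz1; simp at hz1
  refine ⟨S.nrm z, S.nrm_pos hzne, fun x => ?_⟩
  rcases eq_or_ne x 0 with rfl | hx
  · simp [S.nrm_zero, S.nrm_nonneg]
  · have hn : ‖x‖ ≠ 0 := norm_ne_zero_iff.mpr hx
    have hu : ‖x‖⁻¹ • x ∈ Metric.sphere (0 : Vec N) 1 := by
      simp [norm_smul, abs_of_pos (inv_pos.mpr (norm_pos_iff.mpr hx)), inv_mul_cancel₀ hn]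
    have h1 : S.nrm z ≤ S.nrm (‖x‖⁻¹ • x) := hmin hu
    have h2 : S.nrm (‖x‖⁻¹ • x) = ‖x‖⁻¹ * S.nrm x := by
      rw [S.nrm_smul]; congr 1; exact abs_of_pos (inv_pos.mpr (norm_pos_iff.mpr hx))
    rw [h2] at h1
    have hpos : (0:ℝ) < ‖x‖ := norm_pos_iff.mpr hx
    calc S.nrm z * ‖x‖ ≤ (‖x‖⁻¹ * S.nrm x) * ‖x‖ := by nlinarith
    _ = S.nrm x := by field_simp

def cLow : ℝ := S.exists_cLow.choose

lemma cLow_pos : 0 < S.cLow := S.exists_cLow.choose_spec.1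

lemma cLow_le (x : Vec N) : S.cLow * ‖x‖ ≤ S.nrm x := S.exists_cLow.choose_spec.2 x

lemma dualSet_bound (a : Vec N) {t : ℝ}
    (ht : t ∈ {t : ℝ | ∃ x : Vec N, S.nrm x ≤ 1 ∧ t = ∑ i, a i * x i}) :
    t ≤ S.cLow⁻¹ * ∑ i, |a i| := by
  obtain ⟨x, hx, rfl⟩ := ht
  have hxb : ‖x‖ ≤ S.cLow⁻¹ := by
    have h1 := S.cLow_le x
    have hc := S.cLow_pos
    have h2 : (0:ℝ) ≤ ‖x‖ := norm_nonneg x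
    have h3 : S.cLow * ‖x‖ ≤ 1 := le_trans h1 hx
    calc ‖x‖ = S.cLow⁻¹ * (S.cLow * ‖x‖) := by field_simp
    _ ≤ S.cLow⁻¹ * 1 := by
        apply mul_le_mul_of_nonneg_left h3 (le_of_lt (inv_pos.mpr hc))
    _ = S.cLow⁻¹ := mul_one _
  calc ∑ i, a i * x i ≤ ∑ i, |a i| * S.cLow⁻¹ := by
        apply Finset.sum_le_sum
        intro i _
        calc a i * x i ≤ |a i * x i| := le_abs_self _
        _ = |a i| * |x i| := abs_mul _ _
        _ ≤ |a i| * S.cLow⁻¹ := by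
            apply mul_le_mul_of_nonneg_left _ (abs_nonneg _)
            exact le_trans (norm_le_pi_norm x i) hxb
  _ = S.cLow⁻¹ * ∑ i, |a i| := by rw [Finset.mul_sum]; simp [mul_comm]

lemma dualSet_bddAbove (a : Vec N) :
    BddAbove {t : ℝ | ∃ x : Vec N, S.nrm x ≤ 1 ∧ t = ∑ i, a i * x i} :=
  ⟨_, fun _ ht => S.dualSet_bound a ht⟩

lemma dualSet_nonempty (a : Vec N) :
    {t : ℝ | ∃ x : Vec N, S.nrm x ≤ 1 ∧ t = ∑ i, a i * x i}.Nonempty :=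
  ⟨0, 0, by simp [S.nrm_zero]⟩

lemma le_dual {a x : Vec N} (hx : S.nrm x ≤ 1) : ∑ i, a i * x i ≤ S.dual a :=
  le_csSup (S.dualSet_bddAbove a) ⟨x, hx, rfl⟩

lemma dual_nonneg (a : Vec N) : 0 ≤ S.dual a := by
  have := S.le_dual (a := a) (x := 0) (by simp [S.nrm_zero])
  simpa using this

lemma dual_le (a : Vec N) : S.dual a ≤ S.cLow⁻¹ * ∑ i, |a i| :=
  csSup_le (S.dualSet_nonempty a) (fun _ ht => S.dualSet_bound a ht)

lemma pairing_le (a y : Vec N) : ∑ i, a i * y i ≤ S.dual a * S.nrm y := by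
  rcases eq_or_ne y 0 with rfl | hy
  · simp [S.nrm_zero]
  · have hny : 0 < S.nrm y := S.nrm_pos hy
    have hx : S.nrm ((S.nrm y)⁻¹ • y) ≤ 1 := by
      rw [S.nrm_smul, abs_of_pos (inv_pos.mpr hny), inv_mul_cancel₀ hny.ne']
    have h := S.le_dual (a := a) hx
    have h2 : ∑ i, a i * ((S.nrm y)⁻¹ • y) i = (S.nrm y)⁻¹ * ∑ i, a i * y i := by
      rw [Finset.mul_sum]; apply Finset.sum_congr rfl; intro i _; simp; ring
    rw [h2] at h
    calc ∑ i, a i * y i = S.nrm y * ((S.nrm y)⁻¹ * ∑ i, a i * y i) := by field_simp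
    _ ≤ S.nrm y * S.dual a := by nlinarith
    _ = S.dual a * S.nrm y := mul_comm _ _

lemma abs_pairing_le (a y : Vec N) : |∑ i, a i * y i| ≤ S.dual a * S.nrm y := by
  rw [abs_le]
  constructor
  · have := S.pairing_le a (-y)
    rw [gnorm_neg _ S.nrm_smul] at this
    simp only [Pi.neg_apply, mul_neg, Finset.sum_neg_distrib] at this
    linarith
  · exact S.pairing_le a y

lemma dual_add (a a' : Vec N) : S.dual (a + a') ≤ S.dual a + S.dual a' := by
  apply csSup_le (S.dualSet_nonempty _)
  rintro t ⟨x, hx, rfl⟩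
  have h1 := S.le_dual (a := a) hx
  have h2 := S.le_dual (a := a') hx
  have : ∑ i, (a + a') i * x i = (∑ i, a i * x i) + ∑ i, a' i * x i := by
    rw [← Finset.sum_add_distrib]; apply Finset.sum_congr rfl; intro i _; simp; ring
  rw [this]; linarith

lemma dual_zero : S.dual 0 = 0 := by
  apply le_antisymm
  · apply csSup_le (S.dualSet_nonempty _)
    rintro t ⟨x, hx, rfl⟩; simp
  · exact S.dual_nonneg 0

lemma dual_smul_le (t : ℝ) (a : Vec N) : S.dual (t • a) ≤ |t| * S.dual a := by
  apply csSup_le (S.dualSet_nonempty _)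
  rintro s ⟨x, hx, rfl⟩
  have h1 : |∑ i, a i * x i| ≤ S.dual a := by
    rcases abs_cases (∑ i, a i * x i) with ⟨h, _⟩ | ⟨h, _⟩
    · rw [h]; exact S.le_dual hx
    · rw [h]
      have := S.le_dual (a := a) (x := -x) (by rw [gnorm_neg _ S.nrm_smul]; exact hx)
      simp only [Pi.neg_apply, mul_neg, Finset.sum_neg_distrib] at this
      linarith
  calc ∑ i, (t • a) i * x i = t * ∑ i, a i * x i := by
        rw [Finset.mul_sum]; apply Finset.sum_congr rfl; intro i _; simp; ring
  _ ≤ |t * ∑ i, a i * x i| := le_abs_self _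
  _ = |t| * |∑ i, a i * x i| := abs_mul _ _
  _ ≤ |t| * S.dual a := mul_le_mul_of_nonneg_left h1 (abs_nonneg _)

lemma dual_smul (t : ℝ) (a : Vec N) : S.dual (t • a) = |t| * S.dual a := by
  rcases eq_or_ne t 0 with rfl | ht
  · simp [S.dual_zero]
  · apply le_antisymm (S.dual_smul_le t a)
    have := S.dual_smul_le t⁻¹ (t • a)
    rw [smul_smul, inv_mul_cancel₀ ht, one_smul, abs_inv] at this
    have habs : 0 < |t| := abs_pos.mpr ht
    calc |t| * S.dual a ≤ |t| * (|t|⁻¹ * S.dual (t • a)) := by nlinarith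
    _ = S.dual (t • a) := by field_simp

lemma dual_pos {a : Vec N} (ha : a ≠ 0) : 0 < S.dual a := by
  obtain ⟨i, hi⟩ : ∃ i, a i ≠ 0 := by
    by_contra h
    push_neg at h
    exact ha (funext h)
  have hs : (Pi.single i 1 : Vec N) ≠ 0 := by
    intro h
    have := congrFun h i
    simp at this
  have hn : 0 < S.nrm ((Pi.single i 1 : Vec N)) := S.nrm_pos hs
  set x : Vec N := (S.nrm ((Pi.single i 1 : Vec N)))⁻¹ • (Pi.single i 1 : Vec N) with hxdef
  have hx : S.nrm x ≤ 1 := by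
    rw [hxdef, S.nrm_smul, abs_of_pos (inv_pos.mpr hn), inv_mul_cancel₀ hn.ne']
  have h1 : ∑ j, a j * x j ≤ S.dual a := S.le_dual hx
  have h2 : ∑ j, a j * (-x) j ≤ S.dual a := S.le_dual (by rw [gnorm_neg _ S.nrm_smul]; exact hx)
  have hv : ∑ j, a j * x j = a i * (S.nrm ((Pi.single i 1 : Vec N)))⁻¹ := by
    rw [hxdef]
    have : ∀ j, a j * ((S.nrm ((Pi.single i 1 : Vec N)))⁻¹ • (Pi.single i 1 : Vec N)) j
        = if j = i then a i * (S.nrm ((Pi.single i 1 : Vec N)))⁻¹ else 0 := by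
      intro j
      by_cases h : j = i
      · simp [h]
      · simp [h, Pi.single_apply]
    rw [Finset.sum_congr rfl (fun j _ => this j)]
    simp
  have hv2 : ∑ j, a j * (-x) j = -(a i * (S.nrm ((Pi.single i 1 : Vec N)))⁻¹) := by
    simp only [Pi.neg_apply, mul_neg, Finset.sum_neg_distrib]
    rw [hv]
  rw [hv] at h1
  rw [hv2] at h2
  have : |a i| * (S.nrm ((Pi.single i 1 : Vec N)))⁻¹ ≤ S.dual a := by
    rcases abs_cases (a i) with ⟨h, _⟩ | ⟨h, _⟩
    · rw [h]; exact h1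
    · rw [h]; linarith
  have : 0 < |a i| * (S.nrm ((Pi.single i 1 : Vec N)))⁻¹ := by positivity
  linarith

lemma dual_continuous : Continuous S.dual := by
  apply continuous_of_dominated_sub S.dual (fun v => ∑ i, |v i| * S.dual ((Pi.single i 1 : Vec N)))
  · intro x y
    refine le_trans (gnorm_abs_sub _ S.dual_add S.dual_smul x y) ?_
    calc S.dual (x - y) = S.dual (∑ i, (x - y) i • (Pi.single i 1 : Vec N)) := by rw [← vec_decomp]
    _ ≤ ∑ i, S.dual ((x - y) i • (Pi.single i 1 : Vec N)) := gnorm_sum_le _ S.dual_add S.dual_smul _ _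
    _ = ∑ i, |(x - y) i| * S.dual ((Pi.single i 1 : Vec N)) := by simp [S.dual_smul]
  · exact continuous_finset_sum _ fun i _ => ((continuous_apply i).abs).mul continuous_const
  · simp

end Setting

namespace Setting

variable {N : ℕ} (S : Setting N)

lemma conorm_zero : S.conorm 0 = 0 := by
  have := S.conorm_smul 0 0 S.W.zero_mem
  simpa using this

lemma conorm_nonneg {b : Vec N} (hb : b ∈ S.W) : 0 ≤ S.conorm b := by
  have h1 := S.conorm_add b (-b) hb (S.W.neg_mem hb)
  have h2 : S.conorm (-b) = S.conorm b := by
    have := S.conorm_smul (-1) b hb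
    simpa using this
  rw [add_neg_cancel, S.conorm_zero, h2] at h1
  linarith

/-- the conorm restricted to the subspace `W` -/
def conormW : S.W → ℝ := fun w => S.conorm w

lemma conormW_add (w w' : S.W) : S.conormW (w + w') ≤ S.conormW w + S.conormW w' := by
  simpa [conormW] using S.conorm_add w w' w.2 w'.2

lemma conormW_smul (t : ℝ) (w : S.W) : S.conormW (t • w) = |t| * S.conormW w := by
  simpa [conormW] using S.conorm_smul t w w.2

lemma conormW_continuous : Continuous S.conormW := by
  classical
  set B := Module.finBasis ℝ S.W with hB
  apply continuous_of_dominated_sub S.conormW (fun w => ∑ i, |B.repr w i| * S.conormW (B i))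
  · intro x y
    refine le_trans (gnorm_abs_sub _ S.conormW_add S.conormW_smul x y) ?_
    calc S.conormW (x - y) = S.conormW (∑ i, B.repr (x - y) i • B i) := by
          rw [B.sum_repr (x - y)]
    _ ≤ ∑ i, S.conormW (B.repr (x - y) i • B i) :=
        gnorm_sum_le _ S.conormW_add S.conormW_smul _ _
    _ = ∑ i, |B.repr (x - y) i| * S.conormW (B i) := by simp [S.conormW_smul]
  · apply continuous_finset_sum
    intro i _
    have hcoord : Continuous (fun w : S.W => B.repr w i) := by
      have : Continuous ⇑((Finsupp.lapply i : (Fin (Module.finrank ℝ S.W) →₀ ℝ) →ₗ[ℝ] ℝ).comp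
          (B.repr : S.W →ₗ[ℝ] _)) := LinearMap.continuous_of_finiteDimensional _
      simpa [Function.comp_def] using this
    exact (hcoord.abs).mul continuous_const
  · simp

/-- a linear projection of `ℝ^N` onto `W` -/
def projW : Vec N →ₗ[ℝ] S.W :=
  S.W.linearProjOfIsCompl S.W.exists_isCompl.choose S.W.exists_isCompl.choose_spec

lemma projW_continuous : Continuous S.projW :=
  LinearMap.continuous_of_finiteDimensional S.projW

lemma projW_apply {b : Vec N} (hb : b ∈ S.W) : S.projW b = ⟨b, hb⟩ :=
  Submodule.linearProjOfIsCompl_apply_left S.W.exists_isCompl.choose_spec ⟨b, hb⟩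

/-- a continuous extension of `conorm` from `W` to all of `ℝ^N` -/
def cnW : Vec N → ℝ := fun v => S.conormW (S.projW v)

lemma cnW_continuous : Continuous S.cnW :=
  S.conormW_continuous.comp S.projW_continuous

lemma cnW_eq {b : Vec N} (hb : b ∈ S.W) : S.cnW b = S.conorm b := by
  rw [cnW, S.projW_apply hb, conormW]

lemma cnW_nonneg (v : Vec N) : 0 ≤ S.cnW v := S.conorm_nonneg (S.projW v).2

lemma isClosed_W : IsClosed (S.W : Set (Vec N)) :=
  Submodule.closed_of_finiteDimensional S.W

lemma measurableSet_W : MeasurableSet (S.W : Set (Vec N)) :=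
  S.isClosed_W.measurableSet

end Setting

namespace Setting

variable {N : ℕ} (S : Setting N)

lemma conv_continuous (x : Vec N) : Continuous (fun b => conv S.U b x) := by
  unfold conv Matrix.mulVec dotProduct
  apply continuous_pi
  intro i
  apply continuous_finset_sum
  intro j _
  apply continuous_const.mul
  apply Continuous.mul _ continuous_const
  apply continuous_finset_sum
  intro k _
  exact continuous_const.mul (continuous_apply k)

lemma conv_smul (s : ℝ) (b x : Vec N) : conv S.U (s • b) x = s • conv S.U b x := by
  unfold conv
  rw [Matrix.mulVec_smul, smul_mul_assoc, Matrix.mulVec_smul]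

lemma conv_zero (x : Vec N) : conv S.U 0 x = 0 := by
  have := S.conv_smul 0 0 x
  simpa using this

lemma relu_smul {s : ℝ} (hs : 0 ≤ s) (v : Vec N) : relu (s • v) = s • relu v := by
  funext i
  simp only [relu, Pi.smul_apply, smul_eq_mul]
  rcases le_total (v i) 0 with h | h
  · rw [max_eq_right h, max_eq_right (by nlinarith), mul_zero]
  · rw [max_eq_left h, max_eq_left (by nlinarith)]

lemma relu_zero : relu (0 : Vec N) = 0 := by
  funext i; simp [relu]

lemma neuron_eq (x : Vec N) (p : Param N) :
    S.neuron x p = ∑ i, p.1 i * relu (conv S.U p.2.1 x + p.2.2) i := rfl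

lemma neuron_continuous (x : Vec N) : Continuous (fun p : Param N => S.neuron x p) := by
  unfold neuron
  apply continuous_finset_sum
  intro i _
  apply Continuous.mul
  · exact (continuous_apply i).comp continuous_fst
  · have h1 : Continuous (fun p : Param N => conv S.U p.2.1 x + p.2.2) := by
      apply Continuous.add
      · exact (S.conv_continuous x).comp (continuous_fst.comp continuous_snd)
      · exact continuous_snd.comp continuous_snd
    have h2 : Continuous (fun v : Vec N => relu v i) := by
      unfold relu
      exact (continuous_apply i).max continuous_const
    exact h2.comp h1
  
lemma neuron_smul_a (x : Vec N) (t : ℝ) (a b c : Vec N) :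
    S.neuron x (t • a, b, c) = t * S.neuron x (a, b, c) := by
  unfold neuron
  rw [Finset.mul_sum]
  apply Finset.sum_congr rfl
  intro i _
  simp; ring

lemma neuron_smul_bc (x : Vec N) {s : ℝ} (hs : 0 ≤ s) (a b c : Vec N) :
    S.neuron x (a, s • b, s • c) = s * S.neuron x (a, b, c) := by
  unfold neuron
  simp only
  rw [S.conv_smul, ← smul_add, relu_smul hs, Finset.mul_sum]
  apply Finset.sum_congr rfl
  intro i _
  simp; ring

lemma neuron_zero_bc (x : Vec N) (a : Vec N) : S.neuron x (a, 0, 0) = 0 := by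
  unfold neuron
  simp [S.conv_zero, relu_zero]

lemma neuron_abs_le {x : Vec N} (hx : x ∈ S.dom) {p : Param N} (hb : p.2.1 ∈ S.W) :
    |S.neuron x p| ≤ S.dual p.1 * (S.conorm p.2.1 + S.nrm p.2.2) := by
  refine le_trans (S.abs_pairing_le p.1 _) ?_
  apply mul_le_mul_of_nonneg_left _ (S.dual_nonneg _)
  calc S.nrm (relu (conv S.U p.2.1 x + p.2.2)) ≤ S.nrm (conv S.U p.2.1 x + p.2.2) :=
        S.relu_nrm_le _
  _ ≤ S.nrm (conv S.U p.2.1 x) + S.nrm p.2.2 := S.nrm_add _ _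
  _ ≤ S.conorm p.2.1 + S.nrm p.2.2 := by
      have := S.conv_nrm_le p.2.1 hb x hx
      linarith

lemma weight_nonneg (p : Param N) (hb : p.2.1 ∈ S.W) : 0 ≤ S.weight p :=
  mul_nonneg (S.dual_nonneg _) (by
    have := S.conorm_nonneg hb
    have := S.nrm_nonneg p.2.2
    linarith)

/-- measurable version of the weight -/
def weight' (p : Param N) : ℝ := S.dual p.1 * (S.cnW p.2.1 + S.nrm p.2.2)

lemma weight'_continuous : Continuous S.weight' := by
  unfold weight'
  exact (S.dual_continuous.comp continuous_fst).mul
    (((S.cnW_continuous.comp (continuous_fst.comp continuous_snd)).add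
      (S.nrm_continuous.comp (continuous_snd.comp continuous_snd))))

lemma weight'_nonneg (p : Param N) : 0 ≤ S.weight' p :=
  mul_nonneg (S.dual_nonneg _) (by
    have := S.cnW_nonneg p.2.1
    have := S.nrm_nonneg p.2.2
    linarith)

lemma weight'_eq {p : Param N} (hb : p.2.1 ∈ S.W) : S.weight' p = S.weight p := by
  unfold weight' weight
  rw [S.cnW_eq hb]

/-- if the weight vanishes (with `b ∈ W`) then the neuron vanishes -/
lemma neuron_eq_zero_of_weight_eq_zero {p : Param N} (hb : p.2.1 ∈ S.W)
    (hw : S.weight p = 0) (x : Vec N) : S.neuron x p = 0 := by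
  rcases mul_eq_zero.mp hw with h | h
  · have ha : p.1 = 0 := by
      by_contra hne
      exact (S.dual_pos hne).ne' h
    unfold neuron
    rw [ha]
    simp
  · have h1 := S.conorm_nonneg hb
    have h2 := S.nrm_nonneg p.2.2
    have hb0 : S.conorm p.2.1 = 0 := by linarith
    have hc0 : S.nrm p.2.2 = 0 := by linarith
    have hb0' : p.2.1 = 0 := (S.conorm_eq_zero _ hb).mp hb0
    have hc0' : p.2.2 = 0 := (S.nrm_eq_zero _).mp hc0
    have : p = (p.1, 0, 0) := by
      ext1
      · rfl
      · rw [Prod.ext_iff]; exact ⟨hb0', hc0'⟩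
    rw [this]
    exact S.neuron_zero_bc x p.1

end Setting

namespace Setting

variable {N : ℕ} (S : Setting N)

lemma exists_onST : ∃ p₀ : Param N, S.onST p₀ := by
  haveI : Nonempty (Fin N) := ⟨⟨0, S.hN⟩⟩
  set i : Fin N := Classical.arbitrary _
  set e : Vec N := Pi.single i 1 with he
  have hene : e ≠ 0 := by
    intro h
    have := congrFun h i
    simp [he] at this
  have hd : 0 < S.dual e := S.dual_pos hene
  have hn : 0 < S.nrm e := S.nrm_pos hene
  refine ⟨((S.dual e)⁻¹ • e, 0, (S.nrm e)⁻¹ • e), ?_, S.W.zero_mem, ?_⟩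
  · rw [S.dual_smul, abs_of_pos (inv_pos.mpr hd), inv_mul_cancel₀ hd.ne']
  · rw [S.conorm_zero, S.nrm_smul, abs_of_pos (inv_pos.mpr hn), inv_mul_cancel₀ hn.ne', zero_add]

lemma onST_iff (p : Param N) :
    S.onST p ↔ S.dual p.1 = 1 ∧ p.2.1 ∈ S.W ∧ S.cnW p.2.1 + S.nrm p.2.2 = 1 := by
  unfold onST
  constructor
  · rintro ⟨h1, h2, h3⟩
    exact ⟨h1, h2, by rwa [S.cnW_eq h2]⟩
  · rintro ⟨h1, h2, h3⟩
    exact ⟨h1, h2, by rwa [S.cnW_eq h2] at h3⟩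

lemma measurableSet_onST : MeasurableSet {p : Param N | S.onST p} := by
  have : {p : Param N | S.onST p} =
      {p : Param N | S.dual p.1 = 1} ∩ ({p : Param N | p.2.1 ∈ S.W} ∩
        {p : Param N | S.cnW p.2.1 + S.nrm p.2.2 = 1}) := by
    ext p
    simp only [Set.mem_setOf_eq, Set.mem_inter_iff]
    exact S.onST_iff p
  rw [this]
  refine MeasurableSet.inter ?_ (MeasurableSet.inter ?_ ?_)
  · exact (S.dual_continuous.comp continuous_fst).measurable (measurableSet_singleton 1)
  · exact (measurable_fst.comp measurable_snd) S.measurableSet_W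
  · refine Continuous.measurable ?_ (measurableSet_singleton 1)
    exact (S.cnW_continuous.comp (continuous_fst.comp continuous_snd)).add
      (S.nrm_continuous.comp (continuous_snd.comp continuous_snd))

lemma measurableSet_notW : MeasurableSet {p : Param N | p.2.1 ∉ S.W} :=
  ((measurable_fst.comp measurable_snd) S.measurableSet_W).compl

lemma deconstruct (f : Vec N → ℝ) (ρh : Measure (Param N)) (η : Param N → ℝ)
    (hprob : IsProbabilityMeasure ρh) (hst : ρh {p : Param N | ¬ S.onST p} = 0)
    (hη : MemLp η 2 ρh) (hrep : ∀ x ∈ S.dom, f x = ∫ p, S.neuron x p * η p ∂ρh) :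
    ∃ ρ ∈ S.reps f, S.cost ρ ≤ eLpNorm η 2 ρh := by
  have hηm : AEMeasurable η ρh := hη.aestronglyMeasurable.aemeasurable
  set Ψ : Param N → Param N := fun p => (η p • p.1, p.2.1, p.2.2) with hΨ
  have hae : AEMeasurable Ψ ρh := by
    refine AEMeasurable.prodMk ?_ (AEMeasurable.prodMk ?_ ?_)
    · exact hηm.smul measurable_fst.aemeasurable
    · exact (measurable_fst.comp measurable_snd).aemeasurable
    · exact (measurable_snd.comp measurable_snd).aemeasurable
  set ρ : Measure (Param N) := Measure.map Ψ ρh with hρdef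
  haveI probρ : IsProbabilityMeasure ρ := Measure.isProbabilityMeasure_map hae
  have honst : ∀ᵐ p ∂ρh, S.onST p := ae_iff.mpr hst
  have hWnull : ρ {p : Param N | p.2.1 ∉ S.W} = 0 := by
    rw [hρdef, Measure.map_apply_of_aemeasurable hae S.measurableSet_notW]
    have hsub : Ψ ⁻¹' {p : Param N | p.2.1 ∉ S.W} ⊆ {p : Param N | ¬ S.onST p} := by
      intro p hp
      simp only [Set.mem_preimage, Set.mem_setOf_eq, hΨ] at hp ⊢
      intro h
      exact hp h.2.1
    exact measure_mono_null hsub hst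
  have hbound : ∀ x ∈ S.dom, ∀ᵐ p ∂ρh, |S.neuron x p| ≤ 1 := by
    intro x hx
    filter_upwards [honst] with p hp
    have := S.neuron_abs_le hx hp.2.1
    rw [hp.2.2, hp.1, one_mul] at this
    exact this
  have hψ : ∀ x p, S.neuron x (Ψ p) = η p * S.neuron x p := fun x p =>
    S.neuron_smul_a x (η p) p.1 p.2.1 p.2.2
  have hint : ∀ x ∈ S.dom, Integrable (fun p => S.neuron x p * η p) ρh := by
    intro x hx
    refine Integrable.mono (hη.integrable one_le_two)
      (((S.neuron_continuous x).aestronglyMeasurable).mul hη.aestronglyMeasurable) ?_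
    filter_upwards [hbound x hx] with p hp
    rw [Real.norm_eq_abs, Real.norm_eq_abs, abs_mul]
    nlinarith [abs_nonneg (η p), abs_nonneg (S.neuron x p)]
  refine ⟨ρ, ⟨probρ, hWnull, fun x hx => ⟨?_, ?_⟩⟩, ?_⟩
  · rw [hρdef]
    rw [integrable_map_measure ((S.neuron_continuous x).aestronglyMeasurable) hae]
    have : (fun p => S.neuron x (Ψ p)) = fun p => S.neuron x p * η p := by
      funext p
      rw [hψ x p, mul_comm]
    rw [Function.comp_def, this]
    exact hint x hx
  · rw [hρdef, integral_map hae ((S.neuron_continuous x).aestronglyMeasurable)]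
    rw [hrep x hx]
    apply integral_congr_ae
    filter_upwards with p
    rw [hψ x p, mul_comm]
  · -- cost bound
    have hwae : (fun p => ENNReal.ofReal (S.weight p)) =ᵐ[ρ]
        fun p => ENNReal.ofReal (S.weight' p) := by
      have : ∀ᵐ p ∂ρ, p.2.1 ∈ S.W := ae_iff.mpr hWnull
      filter_upwards [this] with p hp
      rw [S.weight'_eq hp]
    have hcost : S.cost ρ = ∫⁻ p, ENNReal.ofReal (S.weight' p) ∂ρ := lintegral_congr_ae hwae
    have hm : AEMeasurable (fun p : Param N => ENNReal.ofReal (S.weight' p))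
        (Measure.map Ψ ρh) :=
      (S.weight'_continuous.measurable.ennreal_ofReal).aemeasurable
    rw [hcost, hρdef, lintegral_map' hm hae]
    have hval : ∀ᵐ p ∂ρh, ENNReal.ofReal (S.weight' (Ψ p)) = ENNReal.ofReal |η p| := by
      filter_upwards [honst] with p hp
      congr 1
      have h1 : S.weight' (Ψ p) = S.dual (η p • p.1) * (S.cnW p.2.1 + S.nrm p.2.2) := rfl
      rw [h1, S.dual_smul, hp.1, S.cnW_eq hp.2.1, hp.2.2]
      ring
    rw [lintegral_congr_ae hval]
    have h1 : ∫⁻ p, ENNReal.ofReal |η p| ∂ρh = eLpNorm η 1 ρh := by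
      rw [eLpNorm_one_eq_lintegral_enorm]
      apply lintegral_congr
      intro p
      rw [← Real.norm_eq_abs, ofReal_norm]
    rw [h1]
    exact eLpNorm_le_eLpNorm_of_exponent_le (by norm_num) hη.aestronglyMeasurable

end Setting

namespace Setting

variable {N : ℕ} (S : Setting N)

lemma construct (f : Vec N → ℝ) (ρ : Measure (Param N)) (hρ : ρ ∈ S.reps f)
    (hfin : S.cost ρ ≠ ⊤) :
    ∃ (ρh : Measure (Param N)) (η : Param N → ℝ), IsProbabilityMeasure ρh ∧
      ρh {p : Param N | ¬ S.onST p} = 0 ∧ MemLp η 2 ρh ∧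
      (∀ x ∈ S.dom, f x = ∫ p, S.neuron x p * η p ∂ρh) ∧ eLpNorm η 2 ρh = S.cost ρ := by
  obtain ⟨hprob, hWnull, hrep⟩ := hρ
  obtain ⟨p₀, hp₀⟩ := S.exists_onST
  have hSTc : MeasurableSet {p : Param N | ¬ S.onST p} := by
    have := S.measurableSet_onST.compl
    simpa [Set.compl_setOf] using this
  have haeW : ∀ᵐ p ∂ρ, p.2.1 ∈ S.W := ae_iff.mpr hWnull
  have hwae : (fun p => ENNReal.ofReal (S.weight p)) =ᵐ[ρ]
      fun p => ENNReal.ofReal (S.weight' p) := by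
    filter_upwards [haeW] with p hp
    rw [S.weight'_eq hp]
  have hcost : S.cost ρ = ∫⁻ p, ENNReal.ofReal (S.weight' p) ∂ρ := lintegral_congr_ae hwae
  rcases eq_or_ne (S.cost ρ) 0 with h0 | h0
  · -- zero cost : f vanishes on dom
    have hz : (fun p => ENNReal.ofReal (S.weight' p)) =ᵐ[ρ] 0 := by
      rw [hcost] at h0
      exact (lintegral_eq_zero_iff'
        (S.weight'_continuous.measurable.ennreal_ofReal).aemeasurable).mp h0
    have hneuron0 : ∀ x, ∀ᵐ p ∂ρ, S.neuron x p = 0 := by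
      intro x
      filter_upwards [hz, haeW] with p h1 h2
      have hw0 : S.weight' p = 0 := by
        have h3 := ENNReal.ofReal_eq_zero.mp h1
        have h4 := S.weight'_nonneg p
        linarith
      exact S.neuron_eq_zero_of_weight_eq_zero h2 (by rw [← S.weight'_eq h2]; exact hw0) x
    have hf0 : ∀ x ∈ S.dom, f x = 0 := by
      intro x hx
      rw [(hrep x hx).2]
      have : (fun p => S.neuron x p) =ᵐ[ρ] 0 := hneuron0 x
      rw [integral_congr_ae this]
      simp
    refine ⟨Measure.dirac p₀, fun _ => 0, by infer_instance, ?_, ?_, ?_, ?_⟩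
    · rw [Measure.dirac_apply' _ hSTc]
      simp [hp₀]
    · exact memLp_const 0
    · intro x hx
      simp [hf0 x hx]
    · rw [h0]
      simp [eLpNorm_zero']
  · -- positive finite cost
    set C : ℝ := (S.cost ρ).toReal with hCdef
    have hCpos : 0 < C := ENNReal.toReal_pos h0 hfin
    have hofC : ENNReal.ofReal C = S.cost ρ := ENNReal.ofReal_toReal hfin
    set d : Param N → NNReal := fun p => Real.toNNReal (S.weight' p / C) with hd
    have hdm : Measurable d := (S.weight'_continuous.measurable.div_const C).real_toNNReal
    set ρ' : Measure (Param N) := ρ.withDensity (fun p => (d p : ℝ≥0∞)) with hρ'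
    have hcoe : ∀ p, ((d p : ℝ≥0∞)) = ENNReal.ofReal (S.weight' p) * (ENNReal.ofReal C)⁻¹ := by
      intro p
      show ENNReal.ofReal (S.weight' p / C) = _
      rw [ENNReal.ofReal_div_of_pos hCpos, div_eq_mul_inv]
    have hmass : ρ' Set.univ = 1 := by
      rw [hρ', withDensity_apply _ MeasurableSet.univ, Measure.restrict_univ,
        lintegral_congr hcoe,
        lintegral_mul_const _ (S.weight'_continuous.measurable.ennreal_ofReal),
        ← hcost, hofC, ENNReal.mul_inv_cancel h0 hfin]
    haveI hprob' : IsProbabilityMeasure ρ' := ⟨hmass⟩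
    set s : Param N → ℝ := fun p => S.cnW p.2.1 + S.nrm p.2.2 with hs
    have hscont : Continuous s :=
      (S.cnW_continuous.comp (continuous_fst.comp continuous_snd)).add
        (S.nrm_continuous.comp (continuous_snd.comp continuous_snd))
    set Φ₀ : Param N → Param N :=
      fun p => ((S.dual p.1)⁻¹ • p.1, (s p)⁻¹ • p.2.1, (s p)⁻¹ • p.2.2) with hΦ₀
    have hΦ₀m : Measurable Φ₀ := by
      have h1 : Measurable fun p : Param N => (S.dual p.1)⁻¹ :=
        ((S.dual_continuous.comp continuous_fst).measurable).inv
      have h2 : Measurable fun p : Param N => (s p)⁻¹ := hscont.measurable.inv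
      exact (h1.smul measurable_fst).prodMk
        ((h2.smul (measurable_fst.comp measurable_snd)).prodMk
          (h2.smul (measurable_snd.comp measurable_snd)))
    set Φ : Param N → Param N := fun p => if S.weight' p = 0 then p₀ else Φ₀ p with hΦ
    have hwms : MeasurableSet {p : Param N | S.weight' p = 0} :=
      S.weight'_continuous.measurable (measurableSet_singleton 0)
    have hΦm : Measurable Φ := Measurable.ite hwms measurable_const hΦ₀m
    set ρh := Measure.map Φ ρ' with hρh
    have hprobh : IsProbabilityMeasure ρh := by
      constructor
      rw [hρh, Measure.map_apply hΦm MeasurableSet.univ, Set.preimage_univ, hmass]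
    have hseq : ∀ p : Param N, p.2.1 ∈ S.W → s p = S.conorm p.2.1 + S.nrm p.2.2 := by
      intro p hp
      rw [hs]
      simp only
      rw [S.cnW_eq hp]
    have hΦonST : ∀ p : Param N, p.2.1 ∈ S.W → S.weight' p ≠ 0 → S.onST (Φ p) := by
      intro p hpW hw
      have hmul : S.dual p.1 * s p ≠ 0 := by
        have heq : S.weight' p = S.dual p.1 * s p := rfl
        rwa [heq] at hw
      have hdp : 0 < S.dual p.1 :=
        (S.dual_nonneg p.1).lt_of_ne' (fun h => hmul (by rw [h, zero_mul]))
      have hsp : 0 < s p := by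
        rcases (mul_ne_zero_iff.mp hmul) with ⟨_, h2⟩
        have h3 : 0 ≤ s p := by
          have := S.cnW_nonneg p.2.1
          have := S.nrm_nonneg p.2.2
          rw [hs]
          dsimp only
          linarith
        exact h3.lt_of_ne' h2
      rw [hΦ]
      simp only [if_neg hw]
      refine ⟨?_, S.W.smul_mem _ hpW, ?_⟩
      · rw [S.dual_smul, abs_of_pos (inv_pos.mpr hdp), inv_mul_cancel₀ hdp.ne']
      · rw [S.conorm_smul _ _ hpW, S.nrm_smul, abs_of_pos (inv_pos.mpr hsp)]
        have h4 := hseq p hpW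
        field_simp
        linarith [h4]
    have hWnull' : ρ' {p : Param N | p.2.1 ∉ S.W} = 0 :=
      (withDensity_absolutelyContinuous ρ _) hWnull
    have hw0null : ρ' {p : Param N | S.weight' p = 0} = 0 := by
      rw [hρ', withDensity_apply _ hwms]
      have : ∀ᵐ p ∂ρ, p ∈ {p : Param N | S.weight' p = 0} → ((d p : ℝ≥0∞)) = 0 := by
        filter_upwards with p hp
        have hp' : S.weight' p = 0 := hp
        simp [hd, hp']
      rw [setLIntegral_congr_fun_ae hwms this]
      simp
    have hSTnull : ρh {p : Param N | ¬ S.onST p} = 0 := by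
      rw [hρh, Measure.map_apply hΦm hSTc]
      apply measure_mono_null _ (measure_union_null hw0null hWnull')
      intro p hp
      simp only [Set.mem_preimage, Set.mem_setOf_eq] at hp
      simp only [Set.mem_union, Set.mem_setOf_eq]
      by_contra hcon
      push_neg at hcon
      exact hp (hΦonST p hcon.2 hcon.1)
    have hkey : ∀ x ∈ S.dom,
        (fun p => (d p : ℝ) * (S.neuron x (Φ p) * C)) =ᵐ[ρ] fun p => S.neuron x p := by
      intro x hx
      filter_upwards [haeW] with p hpW
      rcases eq_or_ne (S.weight' p) 0 with hw | hw
      · have h1 : d p = 0 := by rw [hd]; simp [hw]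
        have h2 : S.neuron x p = 0 :=
          S.neuron_eq_zero_of_weight_eq_zero hpW (by rw [← S.weight'_eq hpW]; exact hw) x
        simp [h1, h2]
      · have hmul : S.dual p.1 * s p ≠ 0 := by rwa [weight'] at hw
        have hdp : 0 < S.dual p.1 :=
          (S.dual_nonneg p.1).lt_of_ne' (fun h => hmul (by rw [h, zero_mul]))
        have hsp : 0 < s p := by
          rcases (mul_ne_zero_iff.mp hmul) with ⟨_, h2⟩
          have h3 : 0 ≤ s p := by
            have := S.cnW_nonneg p.2.1
            have := S.nrm_nonneg p.2.2
            rw [hs]; dsimp only; linarith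
          exact h3.lt_of_ne' h2
        have hdcoe : (d p : ℝ) = S.weight' p / C := by
          rw [hd]
          exact Real.coe_toNNReal _ (div_nonneg (S.weight'_nonneg p) hCpos.le)
        have hΦp : Φ p = Φ₀ p := by rw [hΦ]; simp [hw]
        have hnval : S.neuron x (Φ₀ p) = (S.dual p.1)⁻¹ * ((s p)⁻¹ * S.neuron x p) := by
          rw [hΦ₀]
          have h5 : S.neuron x ((S.dual p.1)⁻¹ • p.1, (s p)⁻¹ • p.2.1, (s p)⁻¹ • p.2.2)
              = (S.dual p.1)⁻¹ * S.neuron x (p.1, (s p)⁻¹ • p.2.1, (s p)⁻¹ • p.2.2) :=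
            S.neuron_smul_a x _ _ _ _
          have h6 : S.neuron x (p.1, (s p)⁻¹ • p.2.1, (s p)⁻¹ • p.2.2)
              = (s p)⁻¹ * S.neuron x (p.1, p.2.1, p.2.2) :=
            S.neuron_smul_bc x (inv_pos.mpr hsp).le _ _ _
          have h7 : (p.1, p.2.1, p.2.2) = p := rfl
          rw [h5, h6, h7]
        have hwval : S.weight' p = S.dual p.1 * s p := rfl
        rw [hΦp, hnval, hdcoe, hwval]
        field_simp
    refine ⟨ρh, fun _ => C, hprobh, hSTnull, memLp_const C, ?_, ?_⟩
    · intro x hx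
      have hsm : AEStronglyMeasurable (fun q => S.neuron x q * C) ρh :=
        ((S.neuron_continuous x).mul continuous_const).aestronglyMeasurable
      rw [hρh, integral_map hΦm.aemeasurable hsm, hρ',
        integral_withDensity_eq_integral_smul hdm _]
      rw [(hrep x hx).2]
      apply integral_congr_ae
      filter_upwards [hkey x hx] with p hp
      rw [NNReal.smul_def]
      exact hp.symm
    · rw [eLpNorm_const C (by norm_num) (IsProbabilityMeasure.ne_zero ρh)]
      rw [measure_univ]
      simp only [ENNReal.one_rpow, mul_one]
      rw [← hofC]
      rw [← Real.enorm_eq_ofReal hCpos.le]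

end Setting

/-- `f ∈ B` iff `f` has an `L²(ρ̂)`-density representation over `S × T`,
and `‖f‖_B` is the infimum of the `L²` norms of the densities. -/
theorem barron_eq_union_rkhs {N : ℕ} (S : Setting N) (f : Vec N → ℝ) :
    (S.memB f ↔ ∃ (ρ : Measure (Param N)) (η : Param N → ℝ),
        IsProbabilityMeasure ρ ∧ ρ {p : Param N | ¬ S.onST p} = 0 ∧ MemLp η 2 ρ ∧
        ∀ x ∈ S.dom, f x = ∫ p, S.neuron x p * η p ∂ρ) ∧
    (S.memB f →
      S.barron f = sInf {t : ℝ≥0∞ | ∃ (ρ : Measure (Param N)) (η : Param N → ℝ),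
        IsProbabilityMeasure ρ ∧ ρ {p : Param N | ¬ S.onST p} = 0 ∧ MemLp η 2 ρ ∧
        (∀ x ∈ S.dom, f x = ∫ p, S.neuron x p * η p ∂ρ) ∧ t = eLpNorm η 2 ρ}) := by
  constructor
  · constructor
    · rintro ⟨hne, hbar⟩
      have h : ⨅ ρ ∈ S.reps f, S.cost ρ < ⊤ := hbar
      rw [iInf_lt_iff] at h
      obtain ⟨ρ, hρ⟩ := h
      rw [iInf_lt_iff] at hρ
      obtain ⟨hmem, hlt⟩ := hρ
      obtain ⟨ρh, η, h1, h2, h3, h4, _⟩ := S.construct f ρ hmem hlt.ne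
      exact ⟨ρh, η, h1, h2, h3, h4⟩
    · rintro ⟨ρh, η, hp, hst, hη, hrep⟩
      obtain ⟨ρ, hmem, hle⟩ := S.deconstruct f ρh η hp hst hη hrep
      refine ⟨⟨ρ, hmem⟩, ?_⟩
      calc S.barron f ≤ S.cost ρ := iInf₂_le ρ hmem
      _ ≤ eLpNorm η 2 ρh := hle
      _ < ⊤ := hη.2
  · intro _
    apply le_antisymm
    · apply le_sInf
      rintro t ⟨ρh, η, hp, hst, hη, hrep, rfl⟩
      obtain ⟨ρ, hmem', hle⟩ := S.deconstruct f ρh η hp hst hη hrep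
      exact le_trans (iInf₂_le ρ hmem') hle
    · refine le_iInf fun ρ => le_iInf fun hρmem => ?_
      rcases eq_or_ne (S.cost ρ) ⊤ with htop | htop
      · rw [htop]; exact le_top
      · obtain ⟨ρh, η, h1, h2, h3, h4, h5⟩ := S.construct f ρ hρmem htop
        exact sInf_le ⟨ρh, η, h1, h2, h3, h4, h5.symm⟩
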